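/- arXiv:1902.05171 — 2 statements merged into one kernel-verified Lean document; each statement's English description precedes it below -/
import Mathlib

section
/- Let f₀, g₀ : ℝ → ℝ be continuous, and suppose A, X : [t₁, t₂] → ℝ are differentiable with Ȧ = -A f₀(A), Ẋ = g₀(A), and A(t) f₀(A(t)) ≠ 0 for all t ∈ [t₁,t₂]. Then X(t) - X(t₁) = ∫_{A(t)}^{A(t₁)} g₀(y)/(y f₀(y)) dy for all t ∈ [t₁,t₂]. -/
open Set intervalIntegral

/-- Since `v (A t)` never vanishes, `A` can serve as the time variable, with `dX/dA = g(A) / v(A)`. -/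
theorem sub_eq_integral_div_of_hasDerivAt_comp {v g A X : ℝ → ℝ} {a b : ℝ}
    (hv : ContinuousOn v (A '' (uIcc a b))) (hg : ContinuousOn g (A '' (uIcc a b)))
    (hA : ∀ t ∈ uIcc a b, HasDerivAt A (v (A t)) t)
    (hX : ∀ t ∈ uIcc a b, HasDerivAt X (g (A t)) t)
    (hv₀ : ∀ t ∈ uIcc a b, v (A t) ≠ 0) :
    X b - X a = ∫ y in A a..A b, g y / v y := by
  have hA_cont : ContinuousOn A (uIcc a b) := HasDerivAt.continuousOn hA
  have hmaps : MapsTo A (uIcc a b) (A '' (uIcc a b)) := mapsTo_image A _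
  calc X b - X a = ∫ t in a..b, g (A t) :=
        (integral_eq_sub_of_hasDerivAt hX (hg.comp hA_cont hmaps).intervalIntegrable).symm
    _ = ∫ t in a..b, ((fun y => g y / v y) ∘ A) t * v (A t) :=
        integral_congr fun t ht => (div_mul_cancel₀ _ (hv₀ t ht)).symm
    _ = ∫ y in A a..A b, g y / v y :=
        integral_comp_mul_deriv' hA (hv.comp hA_cont hmaps)
          (hg.div hv (by rintro _ ⟨t, ht, rfl⟩; exact hv₀ t ht))

theorem stmt4_general (f₀ g₀ : ℝ → ℝ) (hf₀ : Continuous f₀) (hg₀ : Continuous g₀)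
    (t₁ t₂ : ℝ) (A X : ℝ → ℝ)
    (hA : ∀ t ∈ Icc t₁ t₂, HasDerivAt A (-(A t) * f₀ (A t)) t)
    (hX : ∀ t ∈ Icc t₁ t₂, HasDerivAt X (g₀ (A t)) t)
    (hne : ∀ t ∈ Icc t₁ t₂, A t * f₀ (A t) ≠ 0) :
    ∀ t ∈ Icc t₁ t₂, X t - X t₁ = ∫ y in (A t)..(A t₁), g₀ y / (y * f₀ y) := by
  intro t ht
  have hsub : uIcc t₁ t ⊆ Icc t₁ t₂ := by
    rw [uIcc_of_le ht.1]
    exact Icc_subset_Icc_right ht.2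
  rw [sub_eq_integral_div_of_hasDerivAt_comp (v := fun y => -y * f₀ y)
      (continuous_neg.mul hf₀).continuousOn hg₀.continuousOn
      (fun s hs => hA s (hsub hs)) (fun s hs => hX s (hsub hs))
      (fun s hs => by simpa [neg_mul] using hne s (hsub hs)),
    integral_symm, ← integral_neg]
  simp only [neg_mul, div_neg, neg_neg]

theorem stmt4 (f₀ g₀ : ℝ → ℝ) (hf₀ : Continuous f₀) (hg₀ : Continuous g₀)
    (t₁ t₂ : ℝ) (h12 : t₁ ≤ t₂) (A X : ℝ → ℝ)
    (hA : ∀ t ∈ Icc t₁ t₂, HasDerivAt A (-(A t) * f₀ (A t)) t)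
    (hX : ∀ t ∈ Icc t₁ t₂, HasDerivAt X (g₀ (A t)) t)
    (hne : ∀ t ∈ Icc t₁ t₂, A t * f₀ (A t) ≠ 0) :
    ∀ t ∈ Icc t₁ t₂, X t - X t₁ = ∫ y in (A t)..(A t₁), g₀ y / (y * f₀ y) :=
  stmt4_general f₀ g₀ hf₀ hg₀ t₁ t₂ A X hA hX hne
end

section
/- Fix κ > 0, λ ∈ ℝ, and t₀, X₀ ∈ ℝ. Let A(t) = 1 + 1/√(1 + e^{2κ(t₀ - t)}) and X(t) = 2λ(t - t₀) + (λ/κ) ln(1 + √(1 + e^{2κ(t₀ - t)})) + X₀. Then Ẋ(t) = λ A(t) for all t ∈ ℝ. -/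
open Real

/-- With `s = √(1 + eʸ)` one has `eʸ = s² - 1`, so the chain rule gives
`eʸ / (2s(1 + s)) = (s - 1) / (2s)`. -/
theorem hasDerivAt_log_one_add_sqrt_one_add_exp (y : ℝ) :
    HasDerivAt (fun y => log (1 + √(1 + exp y))) ((1 - 1 / √(1 + exp y)) / 2) y := by
  have hpos : 0 < 1 + exp y := by positivity
  have hs : 0 < √(1 + exp y) := sqrt_pos.mpr hpos
  have hsq : √(1 + exp y) ^ 2 = 1 + exp y := sq_sqrt hpos.le
  have hsqrt : HasDerivAt (fun y => √(1 + exp y)) (exp y / (2 * √(1 + exp y))) y := by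
    simpa using ((hasDerivAt_exp y).const_add 1).sqrt hpos.ne'
  refine (hsqrt.const_add 1).log (by positivity) |>.congr_deriv ?_
  field_simp
  nlinarith

theorem hasDerivAt_comp_log_one_add_sqrt_one_add_exp {g : ℝ → ℝ} {g' t : ℝ}
    (hg : HasDerivAt g g' t) :
    HasDerivAt (fun u => log (1 + √(1 + exp (g u))))
      ((1 - 1 / √(1 + exp (g t))) / 2 * g') t :=
  (hasDerivAt_log_one_add_sqrt_one_add_exp (g t)).comp t hg

theorem stmt9 (κ lam t₀ X₀ : ℝ) (hκ : 0 < κ)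
    (A X : ℝ → ℝ)
    (hAdef : ∀ t, A t = 1 + 1 / Real.sqrt (1 + Real.exp (2 * κ * (t₀ - t))))
    (hXdef : ∀ t, X t = 2 * lam * (t - t₀)
        + (lam / κ) * Real.log (1 + Real.sqrt (1 + Real.exp (2 * κ * (t₀ - t)))) + X₀) :
    ∀ t, HasDerivAt X (lam * A t) t := by
  intro t
  have hphase : HasDerivAt (fun u => 2 * κ * (t₀ - u)) (-(2 * κ)) t := by
    simpa using ((hasDerivAt_id t).const_sub t₀).const_mul (2 * κ)
  have hdrift : HasDerivAt (fun u => 2 * lam * (u - t₀)) (2 * lam) t := by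
    simpa using ((hasDerivAt_id t).sub_const t₀).const_mul (2 * lam)
  have hX := (hdrift.add
    ((hasDerivAt_comp_log_one_add_sqrt_one_add_exp hphase).const_mul (lam / κ))).add_const X₀
  rw [show X = _ from funext hXdef, hAdef t]
  refine hX.congr_deriv ?_
  field_simp
  ring
end
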